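/- arXiv:0903.3618 — 2 statements merged into one kernel-verified Lean document; each statement's English description precedes it below -/
import Mathlib

section
/- Let F₁ = z + z·w + w² and F₂ = z + 2·z·w + 3·w² in ℂ[z,w], and let Φ = z² + 2zw. If G₁, G₂ are polynomials such that F₁·G₁ + F₂·G₂ = Φ, then deg(F₁·G₁) ≥ 3 or deg(F₂·G₂) ≥ 3. -/
/-!
Over a domain the total degree is additive, so if deg(FⱼGⱼ) ≤ 2 = deg Fⱼ then each Gⱼ is a
constant. But no combination a F₁ + b F₂ equals Φ: at (1, 1) both Fⱼ take three times their
value at (1, -1), whereas Φ changes sign there.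
-/

open MvPolynomial

namespace MvPolynomial

variable {σ R : Type*} [CommRing R] [IsDomain R]

theorem eq_C_of_totalDegree_mul_le_degree {F G : MvPolynomial σ R} {s : σ →₀ ℕ}
    (hs : coeff s F ≠ 0) (h : (F * G).totalDegree ≤ s.degree) : G = C (G.coeff 0) := by
  obtain rfl | hG := eq_or_ne G 0
  · simp
  have hF : F ≠ 0 := by rintro rfl; exact hs (coeff_zero s)
  have hsF : s.degree ≤ F.totalDegree := le_totalDegree (mem_support_iff.mpr hs)
  rw [totalDegree_mul_of_isDomain hF hG] at h
  exact totalDegree_eq_zero_iff_eq_C.mp (by omega)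

end MvPolynomial

namespace NoetherBound

noncomputable abbrev F₁ : MvPolynomial (Fin 2) ℂ := X 0 + X 0 * X 1 + X 1 ^ 2

noncomputable abbrev F₂ : MvPolynomial (Fin 2) ℂ := X 0 + 2 * X 0 * X 1 + 3 * X 1 ^ 2

noncomputable abbrev Φ : MvPolynomial (Fin 2) ℂ := X 0 ^ 2 + 2 * X 0 * X 1

theorem coeff_F₁ : coeff (Finsupp.single 1 2) F₁ = 1 := by
  simp [coeff_X_pow, coeff_X, coeff_X_mul', Finsupp.single_eq_single_iff]

theorem coeff_F₂ : coeff (Finsupp.single 1 2) F₂ = 3 := by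
  simp [← map_ofNat C, coeff_C_mul, coeff_X_pow, coeff_X, coeff_X_mul',
    Finsupp.single_eq_single_iff, mul_assoc]

theorem F₁_mul_C_add_F₂_mul_C_ne_Φ (a b : ℂ) : F₁ * C a + F₂ * C b ≠ Φ := by
  intro h
  have at_one_one := congrArg (eval ![1, 1]) h
  have at_one_neg_one := congrArg (eval ![1, -1]) h
  simp only [map_add, map_mul, map_pow, map_ofNat, eval_X, eval_C, Matrix.cons_val_zero,
    Matrix.cons_val_one] at at_one_one at_one_neg_one
  have : (6 : ℂ) = 0 := by linear_combination 3 * at_one_neg_one - at_one_one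
  norm_num at this

end NoetherBound

/-- Let F₁ = z + zw + w², F₂ = z + 2zw + 3w² in ℂ[z,w] and Φ = z² + 2zw.
If F₁G₁ + F₂G₂ = Φ then deg(F₁G₁) ≥ 3 or deg(F₂G₂) ≥ 3 (total degree). -/
theorem stmt1 (G₁ G₂ : MvPolynomial (Fin 2) ℂ)
    (h : (X 0 + X 0 * X 1 + X 1 ^ 2) * G₁ + (X 0 + 2 * X 0 * X 1 + 3 * X 1 ^ 2) * G₂
      = X 0 ^ 2 + 2 * X 0 * X 1) :
    3 ≤ ((X 0 + X 0 * X 1 + X 1 ^ 2 : MvPolynomial (Fin 2) ℂ) * G₁).totalDegree ∨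
      3 ≤ ((X 0 + 2 * X 0 * X 1 + 3 * X 1 ^ 2 : MvPolynomial (Fin 2) ℂ) * G₂).totalDegree := by
  by_contra! ⟨h₁, h₂⟩
  have hG₁ : G₁ = C (G₁.coeff 0) := eq_C_of_totalDegree_mul_le_degree
    (s := Finsupp.single 1 2) (by rw [NoetherBound.coeff_F₁]; exact one_ne_zero)
    (by rw [Finsupp.degree_single]; exact Nat.le_of_lt_succ h₁)
  have hG₂ : G₂ = C (G₂.coeff 0) := eq_C_of_totalDegree_mul_le_degree
    (s := Finsupp.single 1 2) (by rw [NoetherBound.coeff_F₂]; exact three_ne_zero)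
    (by rw [Finsupp.degree_single]; exact Nat.le_of_lt_succ h₂)
  rw [hG₁, hG₂] at h
  exact NoetherBound.F₁_mul_C_add_F₂_mul_C_ne_Φ _ _ h
end

section
/- Let F₁,…,Fₙ ∈ ℂ[z₁,…,zₙ] be polynomials whose common zero set in ℂⁿ is finite, and assume their homogenizations have no common zeros on the hyperplane at infinity in ℙⁿ. If Φ ∈ (F₁,…,Fₙ), then there exist polynomials G₁,…,Gₙ with Σ FⱼGⱼ = Φ and deg(FⱼGⱼ) ≤ deg Φ for each j. -/
open MvPolynomial

/-- The homogenization of F with respect to an extra variable z₀ (variable 0 of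
Fin (n+1)): each monomial z^α of F becomes z₀^{deg F − |α|}·z^α. -/
noncomputable def homogenize {n : ℕ} (F : MvPolynomial (Fin n) ℂ) :
    MvPolynomial (Fin (n + 1)) ℂ :=
  ∑ α ∈ F.support,
    monomial (Finsupp.single (0 : Fin (n + 1)) (F.totalDegree - α.sum fun _ k => k)
        + α.mapDomain Fin.succ) (F.coeff α)

/-!
The leading forms `f j` of the `F j` are the homogenizations restricted to `z₀ = 0`, so the
hypothesis at infinity says that the `f j` have no common zero besides `0`. By the
Nullstellensatz the ideal `(f₁, …, fₙ)` then contains a power of every variable. These powers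
form a regular sequence, and descending along it through the Koszul complex shows that every
syzygy of the `f j` is a Koszul syzygy `h j = ∑ i, a i j * f i` with `a` alternating.

Now write `Φ = ∑ j, F j * G j` with `d = max deg (F j * G j) > deg Φ`. The degree-`d` parts give
a homogeneous syzygy of the `f j`; replacing `G j` by `G j - ∑ i, a i j * F i` for the matching
homogeneous Koszul syzygy leaves `Φ` unchanged, since `a` is alternating, and kills the
degree-`d` parts, so `d` drops.
-/

open Finset

def HasOnlyKoszulSyzygies {R ι : Type*} [CommRing R] [Fintype ι] (f : ι → R) : Prop :=
  ∀ h : ι → R, ∑ j, f j * h j = 0 →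
    ∃ a : ι → ι → R, (∀ i, a i i = 0) ∧ (∀ i j, a i j = -a j i) ∧
      ∀ j, h j = ∑ i, a i j * f i

section KoszulComplex

variable {R ι : Type*} [CommRing R] [LinearOrder ι]

/- A chain `s : Finset ι → R` stands for `∑ S, s S • e_S` in the exterior algebra on
`(e_j)_{j : ι}`. `koszulDiff f` is the Koszul differential
`e_T ↦ ∑_{j ∈ T} ± f j • e_{T∖j}` read off coefficientwise, and `koszulSign j S` is the sign
of moving `e_j` past the `e_k`, `k ∈ S`, `k < j`. -/
def koszulSign (j : ι) (S : Finset ι) : R :=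
  (-1) ^ #{k ∈ S | k < j}

def koszulHomotopy (r : ι → R) (s : Finset ι → R) (T : Finset ι) : R :=
  ∑ j ∈ T, koszulSign j (T.erase j) * r j * s (T.erase j)

lemma koszulSign_empty (j : ι) : (koszulSign j ∅ : R) = 1 := by
  simp [koszulSign]

lemma koszulSign_insert {j : ι} {S : Finset ι} (hj : j ∉ S) (k : ι) :
    (koszulSign k (insert j S) : R) = (if j < k then -1 else 1) * koszulSign k S := by
  unfold koszulSign
  rw [filter_insert]
  split_ifs with h
  · rw [card_insert_of_notMem (by simp [hj]), pow_succ, mul_comm]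
  · rw [one_mul]

lemma koszulSign_mul_self (j : ι) (S : Finset ι) :
    (koszulSign j S : R) * koszulSign j S = 1 := by
  rw [koszulSign, ← pow_add, Even.neg_one_pow ⟨_, rfl⟩]

lemma koszulSign_mul_koszulSign_insert {j k : ι} {S : Finset ι} (hj : j ∉ S) (hk : k ∉ S)
    (hjk : j ≠ k) :
    (koszulSign j S : R) * koszulSign k (insert j S) =
      -(koszulSign k S * koszulSign j (insert k S)) := by
  rw [koszulSign_insert hj, koszulSign_insert hk]
  rcases hjk.lt_or_gt with h | h
  · rw [if_pos h, if_neg h.asymm]; ring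
  · rw [if_neg h.asymm, if_pos h]; ring

lemma koszulSign_insert_mul_koszulSign_insert {j k : ι} {S : Finset ι} (hj : j ∉ S)
    (hk : k ∉ S) (hjk : j ≠ k) :
    (koszulSign j (insert k S) : R) * koszulSign k (insert j S) =
      -(koszulSign j S * koszulSign k S) := by
  rw [koszulSign_insert hj, koszulSign_insert hk]
  rcases hjk.lt_or_gt with h | h
  · rw [if_pos h, if_neg h.asymm]; ring
  · rw [if_neg h.asymm, if_pos h]; ring

lemma koszulHomotopy_insert (r : ι → R) (s : Finset ι → R) {j : ι} {S : Finset ι}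
    (hj : j ∉ S) :
    koszulHomotopy r s (insert j S) = koszulSign j S * r j * s S +
      ∑ k ∈ S, koszulSign k (insert j (S.erase k)) * r k * s (insert j (S.erase k)) := by
  rw [koszulHomotopy, sum_insert hj, erase_insert hj]
  congr 1
  refine sum_congr rfl fun k hk => ?_
  rw [erase_insert_of_ne (ne_of_mem_of_not_mem hk hj).symm]

lemma koszulHomotopy_mem {J : Ideal R} (r : ι → R) {s : Finset ι → R} (hs : ∀ T, s T ∈ J)
    (S : Finset ι) : koszulHomotopy r s S ∈ J :=
  J.sum_mem fun _ _ => J.mul_mem_left _ (hs _)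

lemma koszulHomotopy_eq_zero {r : ι → R} {s : Finset ι → R} {p : ℕ}
    (hs : ∀ T, #T ≠ p → s T = 0) {T : Finset ι} (hT : #T ≠ p + 1) :
    koszulHomotopy r s T = 0 :=
  sum_eq_zero fun j hj => by
    rw [hs _ (by rw [card_erase_of_mem hj]; have := card_pos.mpr ⟨j, hj⟩; omega), mul_zero]

variable [Fintype ι]

def koszulDiff (f : ι → R) : (Finset ι → R) →ₗ[R] Finset ι → R where
  toFun s S := ∑ j ∈ Sᶜ, koszulSign j S * f j * s (insert j S)
  map_add' s t := by ext S; simp only [Pi.add_apply, mul_add, sum_add_distrib]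
  map_smul' c s := by
    ext S; simp only [Pi.smul_apply, smul_eq_mul, RingHom.id_apply, mul_sum]
    exact sum_congr rfl fun _ _ => by ring

lemma koszulDiff_apply (f : ι → R) (s : Finset ι → R) (S : Finset ι) :
    koszulDiff f s S = ∑ j ∈ Sᶜ, koszulSign j S * f j * s (insert j S) :=
  rfl

lemma koszulDiff_erase (f : ι → R) (s : Finset ι → R) {k : ι} {S : Finset ι}
    (hk : k ∈ S) :
    koszulDiff f s (S.erase k) = koszulSign k (S.erase k) * f k * s S +
      ∑ j ∈ Sᶜ, koszulSign j (S.erase k) * f j * s (insert j (S.erase k)) := by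
  rw [koszulDiff_apply, compl_erase, sum_insert (by simpa using hk), insert_erase hk]

lemma koszulDiff_mem {J : Ideal R} (f : ι → R) {s : Finset ι → R} (hs : ∀ T, s T ∈ J)
    (S : Finset ι) : koszulDiff f s S ∈ J :=
  J.sum_mem fun _ _ => J.mul_mem_left _ (hs _)

lemma koszulDiff_koszulHomotopy_add (f r : ι → R) (s : Finset ι → R) (S : Finset ι) :
    koszulDiff f (koszulHomotopy r s) S + koszulHomotopy r (koszulDiff f s) S =
      (∑ j, r j * f j) * s S := by
  have hD : ∀ j ∈ Sᶜ, koszulSign j S * f j * koszulHomotopy r s (insert j S) =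
      r j * f j * s S + ∑ k ∈ S, koszulSign j S * f j *
        (koszulSign k (insert j (S.erase k)) * r k * s (insert j (S.erase k))) := by
    intro j hj
    rw [koszulHomotopy_insert r s (by simpa using hj), mul_add, mul_sum]
    linear_combination (r j * f j * s S) * koszulSign_mul_self (R := R) j S
  have hH : ∀ k ∈ S, koszulSign k (S.erase k) * r k * koszulDiff f s (S.erase k) =
      r k * f k * s S + ∑ j ∈ Sᶜ, koszulSign k (S.erase k) * r k *
        (koszulSign j (S.erase k) * f j * s (insert j (S.erase k))) := by
    intro k hk
    rw [koszulDiff_erase f s hk, mul_add, mul_sum]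
    linear_combination (r k * f k * s S) * koszulSign_mul_self (R := R) k (S.erase k)
  have hcross : ∀ j ∈ Sᶜ, ∀ k ∈ S,
      koszulSign j S * f j *
          (koszulSign k (insert j (S.erase k)) * r k * s (insert j (S.erase k))) +
        koszulSign k (S.erase k) * r k *
          (koszulSign j (S.erase k) * f j * s (insert j (S.erase k))) = 0 := by
    intro j hj k hk
    have hjS : j ∉ S := by simpa using hj
    have hsign := koszulSign_insert_mul_koszulSign_insert (R := R)
      (fun h => hjS (mem_of_mem_erase h)) (notMem_erase k S) (ne_of_mem_of_not_mem hk hjS).symm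
    rw [insert_erase hk] at hsign
    linear_combination (f j * r k * s (insert j (S.erase k))) * hsign
  have hcancel := sum_eq_zero (s := Sᶜ) fun j hj =>
    sum_add_distrib.symm.trans (sum_eq_zero (hcross j hj))
  change ∑ j ∈ Sᶜ, _ + ∑ k ∈ S, _ = _
  rw [sum_congr rfl hD, sum_congr rfl hH, sum_add_distrib, sum_add_distrib, add_add_add_comm,
    sum_comm (s := S), ← sum_add_distrib (s := Sᶜ), hcancel, add_zero, ← sum_compl_add_sum S,
    add_mul, sum_mul, sum_mul]

lemma koszulDiff_koszulDiff (f : ι → R) (s : Finset ι → R) :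
    koszulDiff f (koszulDiff f s) = 0 := by
  ext S
  rw [koszulDiff_apply, Pi.zero_apply]
  have hexp : ∀ j ∈ Sᶜ, koszulSign j S * f j * koszulDiff f s (insert j S) =
      ∑ k ∈ Sᶜ.erase j, koszulSign j S * f j *
        (koszulSign k (insert j S) * f k * s (insert k (insert j S))) := by
    intro j _
    rw [koszulDiff_apply, ← compl_insert, mul_sum]
  rw [sum_congr rfl hexp, sum_sigma']
  refine sum_involution (fun p _ => ⟨p.2, p.1⟩) ?_ ?_ ?_ ?_
  · rintro ⟨j, k⟩ hjk
    obtain ⟨hj, hk⟩ := mem_sigma.mp hjk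
    have hkj : k ≠ j := ne_of_mem_erase hk
    have hsign := koszulSign_mul_koszulSign_insert (R := R) (S := S) (by simpa using hj)
      (by simpa using mem_of_mem_erase hk) hkj.symm
    change _ * (_ * s (insert k (insert j S))) + _ * (_ * s (insert j (insert k S))) = 0
    rw [insert_comm k j]
    linear_combination (f j * f k * s (insert j (insert k S))) * hsign
  · rintro ⟨j, k⟩ hjk _ h
    exact ne_of_mem_erase (mem_sigma.mp hjk).2 (congrArg Sigma.fst h)
  · rintro ⟨j, k⟩ hjk
    obtain ⟨hj, hk⟩ := mem_sigma.mp hjk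
    exact mem_sigma.mpr ⟨mem_of_mem_erase hk, mem_erase.mpr ⟨(ne_of_mem_erase hk).symm, hj⟩⟩
  · intro _ _
    rfl

end KoszulComplex

section KoszulExactness

variable {R ι : Type*} [CommRing R] [Fintype ι] [LinearOrder ι]

/- Vanishing of the Koszul homology `H_p(f; R/J)`, with chains lifted to `R`. -/
def KoszulExactModAt (f : ι → R) (J : Ideal R) (p : ℕ) : Prop :=
  ∀ z : Finset ι → R, (∀ S, #S ≠ p → z S = 0) → (∀ S, koszulDiff f z S ∈ J) →
    ∃ w : Finset ι → R, ∀ S, z S - koszulDiff f w S ∈ J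

lemma koszulExactModAt_of_card_lt (f : ι → R) (J : Ideal R) {p : ℕ}
    (hp : Fintype.card ι < p) : KoszulExactModAt f J p := by
  refine fun z hz _ => ⟨0, fun S => ?_⟩
  rw [hz S (card_le_univ S |>.trans_lt hp).ne, map_zero, Pi.zero_apply, sub_zero]
  exact J.zero_mem

lemma KoszulExactModAt.of_sup {f : ι → R} {J : Ideal R} {p : ℕ} (r : ι → R)
    (hθ : ∀ g, (∑ j, r j * f j) * g ∈ J → g ∈ J)
    (h : KoszulExactModAt f (J ⊔ Ideal.span {∑ j, r j * f j}) (p + 1)) :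
    KoszulExactModAt f J p := by
  -- `koszulHomotopy r z` is a `(p + 1)`-cycle modulo `J ⊔ (θ)`; lifting it to a boundary
  -- shows that `θ * z` is a boundary modulo `J`, and `θ` cancels modulo `J`.
  intro z hz hzJ
  set θ := ∑ j, r j * f j
  have hy : ∀ S, koszulDiff f (koszulHomotopy r z) S ∈ J ⊔ Ideal.span {θ} := fun S => by
    rw [eq_sub_of_add_eq (koszulDiff_koszulHomotopy_add f r z S)]
    exact sub_mem (Ideal.mem_sup_right (Ideal.mul_mem_right _ _ (Ideal.mem_span_singleton_self θ)))
      (Ideal.mem_sup_left (koszulHomotopy_mem r hzJ S))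
  obtain ⟨w, hw⟩ := h _ (fun _ => koszulHomotopy_eq_zero hz) hy
  have hdec : ∀ S, ∃ a ∈ J, ∃ c, koszulHomotopy r z S - koszulDiff f w S = a + c * θ := by
    intro S
    obtain ⟨a, ha, b, hb, hab⟩ := Submodule.mem_sup.mp (hw S)
    obtain ⟨c, rfl⟩ := Ideal.mem_span_singleton'.mp hb
    exact ⟨a, ha, c, hab.symm⟩
  choose a ha c hc using hdec
  have hKa : koszulDiff f (koszulHomotopy r z) = koszulDiff f a + θ • koszulDiff f c := by
    have : koszulHomotopy r z = a + θ • c + koszulDiff f w := by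
      ext S
      simp only [Pi.add_apply, Pi.smul_apply, smul_eq_mul]
      linear_combination hc S
    rw [this, map_add, map_add, map_smul, koszulDiff_koszulDiff, add_zero]
  refine ⟨c, fun S => hθ _ ?_⟩
  have hθz := koszulDiff_koszulHomotopy_add f r z S
  rw [hKa, Pi.add_apply, Pi.smul_apply, smul_eq_mul] at hθz
  rw [show θ * (z S - koszulDiff f c S) = koszulDiff f a S + koszulHomotopy r (koszulDiff f z) S by
    linear_combination -hθz]
  exact add_mem (koszulDiff_mem f ha S) (koszulHomotopy_mem r hzJ S)

lemma KoszulExactModAt.hasOnlyKoszulSyzygies {f : ι → R} (hf : KoszulExactModAt f ⊥ 1) :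
    HasOnlyKoszulSyzygies f := by
  intro h hsyz
  set z : Finset ι → R := fun S => if #S = 1 then ∑ j ∈ S, h j else 0
  have hz : ∀ S, #S ≠ 1 → z S = 0 := fun S hS => if_neg hS
  have hzj : ∀ j, z {j} = h j := fun j => by simp [z]
  have hcycle : ∀ S, koszulDiff f z S ∈ (⊥ : Ideal R) := by
    intro S
    rw [Ideal.mem_bot, koszulDiff_apply]
    rcases S.eq_empty_or_nonempty with rfl | hS
    · simp only [compl_empty, koszulSign_empty, one_mul, insert_empty, hzj]
      exact hsyz
    · refine sum_eq_zero fun j hj => ?_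
      rw [hz _ (by rw [card_insert_of_notMem (by simpa using hj)]; have := hS.card_pos; omega),
        mul_zero]
  obtain ⟨w, hw⟩ := hf z hz hcycle
  have hzw : ∀ S, z S = koszulDiff f w S := fun S => sub_eq_zero.mp (Ideal.mem_bot.mp (hw S))
  have hsign : ∀ i j : ι, i ≠ j → (koszulSign i {j} : R) = -koszulSign j {i} := by
    intro i j hij
    simpa [koszulSign_empty] using koszulSign_mul_koszulSign_insert (R := R) (S := ∅)
      (notMem_empty j) (notMem_empty i) hij.symm
  refine ⟨fun i j => if i = j then 0 else koszulSign i {j} * w {i, j}, fun i => if_pos rfl,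
    fun i j => ?_, fun j => ?_⟩
  · rcases eq_or_ne i j with rfl | hij
    · simp
    · dsimp only
      rw [if_neg hij, if_neg hij.symm, hsign i j hij, pair_comm]
      ring
  · rw [← hzj, hzw, koszulDiff_apply, compl_singleton, eq_comm,
      ← sum_erase (a := j) _ (by simp)]
    refine sum_congr rfl fun i hi => ?_
    dsimp only
    rw [if_neg (ne_of_mem_erase hi)]
    ring

end KoszulExactness

section MonomialIdeal

variable {σ R : Type*} [CommRing R]

noncomputable def varPowIdeal (N : σ → ℕ) (s : Set σ) : Ideal (MvPolynomial σ R) :=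
  Ideal.span ((fun i => X i ^ N i) '' s)

lemma mem_varPowIdeal_iff {N : σ → ℕ} {s : Set σ} {g : MvPolynomial σ R} :
    g ∈ varPowIdeal N s ↔ ∀ α ∈ g.support, ∃ i ∈ s, N i ≤ α i := by
  have : (fun i => (X i ^ N i : MvPolynomial σ R)) '' s =
      (fun α => monomial α (1 : R)) '' ((fun i => Finsupp.single i (N i)) '' s) := by
    rw [Set.image_image]; simp only [X_pow_eq_monomial]
  rw [varPowIdeal, this, mem_ideal_span_monomial_image]
  simp [Finsupp.single_le_iff]

lemma varPowIdeal_empty (N : σ → ℕ) :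
    varPowIdeal N ∅ = (⊥ : Ideal (MvPolynomial σ R)) := by
  simp [varPowIdeal]

lemma varPowIdeal_insert (N : σ → ℕ) (t : σ) (s : Set σ) :
    varPowIdeal N (insert t s) =
      varPowIdeal N s ⊔ Ideal.span {(X t ^ N t : MvPolynomial σ R)} := by
  rw [varPowIdeal, varPowIdeal, Set.image_insert_eq, Ideal.span_insert, sup_comm]

lemma mem_varPowIdeal_of_X_pow_mul_mem {N : σ → ℕ} {s : Set σ} {t : σ} (ht : t ∉ s)
    {g : MvPolynomial σ R} (hg : X t ^ N t * g ∈ varPowIdeal N s) : g ∈ varPowIdeal N s := by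
  rw [mem_varPowIdeal_iff] at hg ⊢
  intro α hα
  have hcoeff : coeff (Finsupp.single t (N t) + α) (X t ^ N t * g) = coeff α g := by
    rw [X_pow_eq_monomial, coeff_monomial_mul, one_mul]
  obtain ⟨i, hi, hNi⟩ := hg _ (mem_support_iff.mpr (hcoeff ▸ mem_support_iff.mp hα))
  refine ⟨i, hi, ?_⟩
  rwa [Finsupp.add_apply, Finsupp.single_eq_of_ne (ne_of_mem_of_not_mem hi ht), zero_add] at hNi

end MonomialIdeal

section Descent

variable {σ R : Type*} [CommRing R] [Fintype σ] [LinearOrder σ]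

theorem hasOnlyKoszulSyzygies_of_X_pow_mem (f : σ → MvPolynomial σ R) (N : σ → ℕ)
    (hN : ∀ i, X i ^ N i ∈ Ideal.span (Set.range f)) : HasOnlyKoszulSyzygies f := by
  -- Descend along the regular sequence `X i ^ N i`: `u` holds the variables whose powers are
  -- not yet in the ideal, and each variable moved out of `u` costs one Koszul degree.
  suffices h : ∀ u : Finset σ, ∀ p, Fintype.card σ < p + #u →
      KoszulExactModAt f (varPowIdeal N (↑u)ᶜ) p by
    refine KoszulExactModAt.hasOnlyKoszulSyzygies ?_
    simpa [varPowIdeal_empty] using h univ 1 (by simp)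
  intro u
  induction u using Finset.induction_on with
  | empty => exact fun p hp => koszulExactModAt_of_card_lt f _ (by simpa using hp)
  | insert t u htu ih =>
    intro p hp
    obtain ⟨r, hr⟩ := (Submodule.mem_span_range_iff_exists_fun _).mp (hN t)
    simp only [smul_eq_mul] at hr
    refine KoszulExactModAt.of_sup r (fun g hg => ?_) ?_
    · exact mem_varPowIdeal_of_X_pow_mul_mem (by simp) (hr ▸ hg)
    · rw [hr, ← varPowIdeal_insert]
      convert ih (p + 1) (by rw [card_insert_of_notMem htu] at hp; omega) using 2
      ext i
      by_cases i = t <;> simp_all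

end Descent

namespace MvPolynomial

variable {σ R : Type*} [CommRing R]

noncomputable def leadingForm (p : MvPolynomial σ R) : MvPolynomial σ R :=
  homogeneousComponent p.totalDegree p

attribute [local instance] MvPolynomial.gradedAlgebra in
lemma homogeneousComponent_mul_of_isHomogeneous_left {p : MvPolynomial σ R} {i : ℕ}
    (hp : p.IsHomogeneous i) (q : MvPolynomial σ R) (n : ℕ) :
    homogeneousComponent n (p * q) = if i ≤ n then p * homogeneousComponent (n - i) q else 0 := by
  simpa only [← DirectSum.Decomposition.decompose'_eq, decomposition.decompose'_apply] using
    DirectSum.coe_decompose_mul_of_left_mem (homogeneousSubmodule σ R) (b := q) n hp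

lemma homogeneousComponent_add_mul {p q : MvPolynomial σ R} {a b : ℕ} (hp : p.totalDegree ≤ a)
    (hq : q.totalDegree ≤ b) :
    homogeneousComponent (a + b) (p * q) = homogeneousComponent a p * homogeneousComponent b q := by
  conv_lhs => rw [← sum_homogeneousComponent p, sum_mul, map_sum]
  simp only [homogeneousComponent_mul_of_isHomogeneous_left
    (homogeneousComponent_isHomogeneous _ p)]
  rw [sum_eq_single a]
  · rw [if_pos (by omega), Nat.add_sub_cancel_left]
  · intro i hi hia
    have : i < a := by have := mem_range.mp hi; omega
    rw [if_pos (by omega), homogeneousComponent_eq_zero _ q (by omega), mul_zero]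
  · intro ha
    rw [homogeneousComponent_eq_zero a p (by simpa using ha), zero_mul, ite_self]

lemma totalDegree_le_of_homogeneousComponent_eq_zero {p : MvPolynomial σ R} {d : ℕ}
    (hp : p.totalDegree ≤ d + 1) (h : homogeneousComponent (d + 1) p = 0) :
    p.totalDegree ≤ d := by
  refine Finset.sup_le fun α hα => show α.degree ≤ d from ?_
  have hle : α.degree ≤ d + 1 := (le_totalDegree hα).trans hp
  by_contra hlt
  have := congrArg (coeff α) h
  rw [coeff_homogeneousComponent, if_pos (by omega), coeff_zero] at this
  exact mem_support_iff.mp hα this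

variable [IsDomain R]

lemma eq_zero_of_totalDegree_mul_lt {p q : MvPolynomial σ R}
    (h : (p * q).totalDegree < p.totalDegree) : q = 0 := by
  by_contra hq
  have hp : p ≠ 0 := by rintro rfl; simp at h
  rw [totalDegree_mul_of_isDomain hp hq] at h
  omega

lemma homogeneousComponent_mul_eq_leadingForm_mul {p q : MvPolynomial σ R} {e : ℕ}
    (h : (p * q).totalDegree ≤ e) :
    homogeneousComponent e (p * q) =
      leadingForm p * homogeneousComponent (e - p.totalDegree) q := by
  rcases eq_or_ne p 0 with rfl | hp
  · simp [leadingForm]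
  rcases eq_or_ne q 0 with rfl | hq
  · simp
  rw [totalDegree_mul_of_isDomain hp hq] at h
  rw [leadingForm, ← homogeneousComponent_add_mul le_rfl (by omega : q.totalDegree ≤ _),
    Nat.add_sub_cancel' (by omega)]

end MvPolynomial

lemma sum_sum_eq_zero_of_alternating {ι M : Type*} [Fintype ι] [AddCommGroup M]
    {c : ι → ι → M} (hdiag : ∀ i, c i i = 0) (hanti : ∀ i j, c i j = -c j i) :
    ∑ i, ∑ j, c i j = 0 := by
  rw [← sum_product']
  refine sum_ninvolution Prod.swap (fun p => by simp [hanti p.1 p.2]) (fun p hp h => hp ?_)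
    (fun _ => mem_univ _) Prod.swap_swap
  rw [← congrArg Prod.fst h]
  exact hdiag _

section DegreeReduction

variable {σ R ι : Type*} [CommRing R] [Fintype ι]

lemma HasOnlyKoszulSyzygies.exists_isHomogeneous {f : ι → MvPolynomial σ R}
    (hf : HasOnlyKoszulSyzygies f) {d : ι → ℕ} (hfd : ∀ i, (f i).IsHomogeneous (d i))
    {e : ℕ}
    {h : ι → MvPolynomial σ R} (hsyz : ∑ j, f j * h j = 0)
    (hh : ∀ j, (h j).IsHomogeneous (e - d j)) (hh0 : ∀ j, e < d j → h j = 0) :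
    ∃ a : ι → ι → MvPolynomial σ R, (∀ i, a i i = 0) ∧ (∀ i j, a i j = -a j i) ∧
      (∀ j, h j = ∑ i, a i j * f i) ∧
      ∀ i j, (a i j).IsHomogeneous (e - d i - d j) ∧ (e < d i + d j → a i j = 0) := by
  obtain ⟨a, hdiag, hanti, hrep⟩ := hf h hsyz
  refine ⟨fun i j => if d i + d j ≤ e then homogeneousComponent (e - d i - d j) (a i j) else 0,
    fun i => by simp [hdiag], fun i j => ?_, fun j => ?_,
    fun i j => ⟨?_, fun hij => if_neg (by omega)⟩⟩
  · dsimp only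
    rw [add_comm, Nat.sub_right_comm, hanti]
    split_ifs <;> simp
  · dsimp only
    by_cases hj : d j ≤ e
    · rw [← homogeneousComponent_eq_self (hh j), hrep j, map_sum]
      refine sum_congr rfl fun i _ => ?_
      rw [mul_comm, homogeneousComponent_mul_of_isHomogeneous_left (hfd i), Nat.sub_right_comm]
      simp only [show d i ≤ e - d j ↔ d i + d j ≤ e by omega]
      split_ifs <;> ring
    · rw [hh0 j (by omega)]
      exact (sum_eq_zero fun i _ => by rw [if_neg (by omega), zero_mul]).symm
  · dsimp only
    split_ifs
    · exact homogeneousComponent_isHomogeneous _ _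
    · exact isHomogeneous_zero _ _ _

variable [IsDomain R]

lemma exists_sum_mul_eq_of_totalDegree_le_succ {F : ι → MvPolynomial σ R}
    (hF : HasOnlyKoszulSyzygies fun j => leadingForm (F j)) {Φ : MvPolynomial σ R} {d : ℕ}
    (hΦ : Φ.totalDegree ≤ d) {G : ι → MvPolynomial σ R} (hG : ∑ j, F j * G j = Φ)
    (hGd : ∀ j, (F j * G j).totalDegree ≤ d + 1) :
    ∃ G' : ι → MvPolynomial σ R, ∑ j, F j * G' j = Φ ∧
      ∀ j, (F j * G' j).totalDegree ≤ d := by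
  set h := fun j => homogeneousComponent (d + 1 - (F j).totalDegree) (G j)
  have hprod : ∀ j, homogeneousComponent (d + 1) (F j * G j) = leadingForm (F j) * h j :=
    fun j => homogeneousComponent_mul_eq_leadingForm_mul (hGd j)
  have hsyz : ∑ j, leadingForm (F j) * h j = 0 := by
    simp_rw [← hprod, ← map_sum, hG]
    exact homogeneousComponent_eq_zero _ _ (by omega)
  obtain ⟨a, hdiag, hanti, hrep, ha⟩ := hF.exists_isHomogeneous
    (fun i => homogeneousComponent_isHomogeneous _ _) hsyz
    (fun j => homogeneousComponent_isHomogeneous _ _)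
    (fun j hj => by simp only [h, eq_zero_of_totalDegree_mul_lt ((hGd j).trans_lt hj), map_zero])
  have hcorr : ∀ i j, (a i j * (F i * F j)).totalDegree ≤ d + 1 ∧
      homogeneousComponent (d + 1) (a i j * (F i * F j)) =
        a i j * (leadingForm (F i) * leadingForm (F j)) := by
    intro i j
    obtain ⟨hhom, hzero⟩ := ha i j
    by_cases hij : d + 1 < (F i).totalDegree + (F j).totalDegree
    · simp [hzero hij]
    have hFF : (F i * F j).totalDegree ≤ (F i).totalDegree + (F j).totalDegree :=
      totalDegree_mul _ _
    refine ⟨(totalDegree_mul _ _).trans (by have := hhom.totalDegree_le; omega), ?_⟩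
    rw [homogeneousComponent_mul_of_isHomogeneous_left hhom, if_pos (by omega),
      show d + 1 - (d + 1 - (F i).totalDegree - (F j).totalDegree) =
        (F i).totalDegree + (F j).totalDegree by omega,
      homogeneousComponent_add_mul le_rfl le_rfl, leadingForm, leadingForm]
  have hexp : ∀ j, F j * (G j - ∑ i, a i j * F i) = F j * G j - ∑ i, a i j * (F i * F j) := by
    intro j
    rw [mul_sub, mul_sum]
    exact congrArg _ (sum_congr rfl fun i _ => by ring)
  refine ⟨fun j => G j - ∑ i, a i j * F i, ?_, fun j => ?_⟩
  · rw [sum_congr rfl fun j _ => hexp j, sum_sub_distrib, hG, sum_comm (γ := ι),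
      sum_sum_eq_zero_of_alternating (by simp [hdiag]) (fun i j => by rw [hanti]; ring), sub_zero]
  · rw [hexp]
    refine totalDegree_le_of_homogeneousComponent_eq_zero
      ((totalDegree_sub _ _).trans (max_le (hGd j) ?_)) ?_
    · exact (totalDegree_finsetSum _ _).trans (Finset.sup_le fun i _ => (hcorr i j).1)
    · rw [map_sub, map_sum, hprod, sum_congr rfl fun i _ => (hcorr i j).2, hrep j, mul_sum,
        ← sum_sub_distrib]
      exact sum_eq_zero fun i _ => by ring

theorem exists_sum_mul_eq_of_totalDegree_le {F : ι → MvPolynomial σ R}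
    (hF : HasOnlyKoszulSyzygies fun j => leadingForm (F j)) {Φ : MvPolynomial σ R}
    (hΦ : Φ ∈ Ideal.span (Set.range F)) :
    ∃ G : ι → MvPolynomial σ R, ∑ j, F j * G j = Φ ∧
      ∀ j, (F j * G j).totalDegree ≤ Φ.totalDegree := by
  suffices h : ∀ k, (∃ G : ι → MvPolynomial σ R, ∑ j, F j * G j = Φ ∧
      ∀ j, (F j * G j).totalDegree ≤ Φ.totalDegree + k) →
      ∃ G : ι → MvPolynomial σ R, ∑ j, F j * G j = Φ ∧
        ∀ j, (F j * G j).totalDegree ≤ Φ.totalDegree by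
    obtain ⟨G, hG⟩ := (Submodule.mem_span_range_iff_exists_fun _).mp hΦ
    refine h (univ.sup fun j => (F j * G j).totalDegree) ⟨G, ?_, fun j => ?_⟩
    · simpa only [smul_eq_mul, mul_comm] using hG
    · exact (le_sup (f := fun j => (F j * G j).totalDegree) (mem_univ j)).trans le_add_self
  intro k
  induction k with
  | zero => exact id
  | succ k ih =>
    rintro ⟨G, hG, hGd⟩
    exact ih (exists_sum_mul_eq_of_totalDegree_le_succ hF (Nat.le_add_right _ k) hG hGd)

end DegreeReduction

section Nullstellensatz

variable {K σ ι : Type*} [Field K] [IsAlgClosed K] [Finite σ]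

theorem exists_X_pow_mem_span_of_forall_eval_eq_zero {f : ι → MvPolynomial σ K}
    (hf : ∀ x, (∀ j, eval x (f j) = 0) → x = 0) (i : σ) :
    ∃ N, X i ^ N ∈ Ideal.span (Set.range f) := by
  change X i ∈ (Ideal.span (Set.range f)).radical
  rw [← vanishingIdeal_zeroLocus_eq_radical (K := K), mem_vanishingIdeal_iff]
  intro x hx
  rw [hf x fun j => mem_zeroLocus_iff.mp hx _ (Ideal.subset_span ⟨j, rfl⟩), aeval_X,
    Pi.zero_apply]

end Nullstellensatz

lemma eval_cons_zero_homogenize {n : ℕ} (F : MvPolynomial (Fin n) ℂ) (x : Fin n → ℂ) :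
    eval (Fin.cons 0 x) (homogenize F) = eval x (leadingForm F) := by
  rw [homogenize, leadingForm, homogeneousComponent_apply, map_sum, map_sum, sum_filter]
  refine sum_congr rfl fun α hα => ?_
  have hle : α.degree ≤ F.totalDegree := le_totalDegree hα
  rw [← one_mul (coeff α F), ← monomial_mul, ← X_pow_eq_monomial, ← rename_monomial,
    map_mul, map_pow, eval_X, eval_rename, Fin.cons_zero, Fin.cons_comp_succ,
    show (α.sum fun _ k => k) = α.degree from rfl]
  split_ifs with h
  · simp [h]
  · rw [zero_pow (by omega), zero_mul]

theorem stmt10_general (n : ℕ) (F : Fin n → MvPolynomial (Fin n) ℂ)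
    (Φ : MvPolynomial (Fin n) ℂ)
    (hinf : ∀ x : Fin (n + 1) → ℂ, x 0 = 0 →
      (∀ j, eval x (homogenize (F j)) = 0) → x = 0)
    (hΦ : Φ ∈ Ideal.span (Set.range F)) :
    ∃ G : Fin n → MvPolynomial (Fin n) ℂ,
      (∑ j, F j * G j) = Φ ∧ ∀ j, (F j * G j).totalDegree ≤ Φ.totalDegree := by
  have hlead : ∀ x : Fin n → ℂ, (∀ j, eval x (leadingForm (F j)) = 0) → x = 0 := by
    intro x hx
    have h0 := hinf (Fin.cons 0 x) rfl fun j => by rw [eval_cons_zero_homogenize, hx j]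
    exact funext fun i => by simpa using congrFun h0 i.succ
  choose N hN using exists_X_pow_mem_span_of_forall_eval_eq_zero hlead
  exact exists_sum_mul_eq_of_totalDegree_le (hasOnlyKoszulSyzygies_of_X_pow_mem _ N hN) hΦ

/-- Max Nöther's AF+BG theorem.  Let F₁,…,Fₙ ∈ ℂ[z₁,…,zₙ] have finite common zero
set in ℂⁿ and suppose their homogenizations have no common zeros on the hyperplane
at infinity {z₀ = 0} in ℙⁿ.  If Φ ∈ (F₁,…,Fₙ) then there are Gⱼ with
Σ FⱼGⱼ = Φ and deg(FⱼGⱼ) ≤ deg Φ for every j. -/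
theorem stmt10 (n : ℕ) (F : Fin n → MvPolynomial (Fin n) ℂ)
    (Φ : MvPolynomial (Fin n) ℂ)
    (hfin : {x : Fin n → ℂ | ∀ j, eval x (F j) = 0}.Finite)
    (hinf : ∀ x : Fin (n + 1) → ℂ, x 0 = 0 →
      (∀ j, eval x (homogenize (F j)) = 0) → x = 0)
    (hΦ : Φ ∈ Ideal.span (Set.range F)) :
    ∃ G : Fin n → MvPolynomial (Fin n) ℂ,
      (∑ j, F j * G j) = Φ ∧ ∀ j, (F j * G j).totalDegree ≤ Φ.totalDegree :=
  stmt10_general n F Φ hinf hΦ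
end
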